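/- W_3 is not a stabilizer state: for every matrix U in the subgroup of GL(ℂ^{2^3}) generated by the three-qubit Clifford generators {H_1, H_2, H_3, P_1, P_2, P_3} ∪ {CNOT_{ij} : i ≠ j, i,j ∈ {1,2,3}}, and for every complex scalar c, U·e_{000} ≠ c·W_3. -/
import Mathlib

/-!
STATEMENT 18: W_3 is not a stabilizer state: for every matrix U in the subgroup of
GL(ℂ^{2^3}) generated by the three-qubit Clifford generators
{H_1, H_2, H_3, P_1, P_2, P_3} ∪ {CNOT_{ij} : i ≠ j}, and for every complex scalar c,
U·e_{000} ≠ c·W_3.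
-/

/-- The Hadamard gate `H = (1/√2)[[1,1],[1,−1]]` on `ℂ^2`. -/
noncomputable def hadamard : Matrix (Fin 2) (Fin 2) ℂ :=
  (1 / (Real.sqrt 2 : ℂ)) • !![1, 1; 1, -1]

/-- The phase gate `P = [[1,0],[0,i]]` on `ℂ^2`. -/
def phaseGate : Matrix (Fin 2) (Fin 2) ℂ := !![1, 0; 0, Complex.I]

/-- For a single-qubit gate `g`, the three-qubit gate `g_i` acting as `g` on the `i`-th
qubit and as the identity on the others (Kronecker product taken entrywise). -/
noncomputable def gateAt (g : Matrix (Fin 2) (Fin 2) ℂ) (i : Fin 3) :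
    Matrix (Fin 3 → Fin 2) (Fin 3 → Fin 2) ℂ :=
  Matrix.of fun v w => ∏ k, if k = i then g (v k) (w k) else (if v k = w k then 1 else 0)

/-- The three-qubit gate `CNOT_{ij}` sending the basis vector indexed by the bit string
`x` to the one indexed by `x` with bit `j` replaced by `x_i ⊕ x_j` (addition in `Fin 2`
is mod 2, i.e. xor). -/
def cnot3 (i j : Fin 3) : Matrix (Fin 3 → Fin 2) (Fin 3 → Fin 2) ℂ :=
  Matrix.of fun v w => if v = Function.update w j (w i + w j) then 1 else 0

/-- The set of three-qubit Clifford generators. -/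
noncomputable def cliffordGens3 : Set (Matrix (Fin 3 → Fin 2) (Fin 3 → Fin 2) ℂ) :=
  {g | (∃ i : Fin 3, g = gateAt hadamard i ∨ g = gateAt phaseGate i) ∨
    ∃ i j : Fin 3, i ≠ j ∧ g = cnot3 i j}

/-- The all-zeros basis vector `e_{000}` of `ℂ^{2^3}`. -/
def e000 : (Fin 3 → Fin 2) → ℂ := fun v => if v = 0 then 1 else 0

/-- The three-qubit W state `W_3 = (1/√3)(e_{100} + e_{010} + e_{001})`. -/
noncomputable def w3 : (Fin 3 → Fin 2) → ℂ :=
  fun v => (1 / (Real.sqrt 3 : ℂ)) *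
    ∑ j : Fin 3, if v = (fun i => if i = j then 1 else 0) then 1 else 0

namespace W3Aux

open Matrix

abbrev P2 := Fin 3 → Fin 2
abbrev Mat := Matrix P2 P2 ℂ

/-- sign as integer -/
def sg2 : Fin 2 → ℤ := fun t => if t = 0 then 1 else -1

/-- sign as complex -/
noncomputable def sgC : Fin 2 → ℂ := fun t => ((sg2 t : ℤ) : ℂ)

/-- Pauli X-part: translation matrix. -/
def Xm (a : P2) : Mat := Matrix.of fun v w => if v = w + a then 1 else 0

/-- Pauli Z-part: diagonal sign matrix. -/
noncomputable def Zm (b : P2) : Mat := Matrix.of fun v w => if v = w then sgC (b ⬝ᵥ w) else 0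

/-- (projective) Pauli operator X^a Z^b -/
noncomputable def pauli (a b : P2) : Mat := Xm a * Zm b

/-- 2×2 Pauli X-part -/
def x2 (s : Fin 2) : Matrix (Fin 2) (Fin 2) ℂ :=
  Matrix.of fun v w => if v = w + s then 1 else 0

/-- 2×2 Pauli Z-part -/
noncomputable def z2 (t : Fin 2) : Matrix (Fin 2) (Fin 2) ℂ :=
  Matrix.of fun v w => if v = w then sgC (t * w) else 0

lemma sgC_zero : sgC 0 = 1 := by simp [sgC, sg2]

lemma sgC_add (s t : Fin 2) : sgC (s + t) = sgC s * sgC t := by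
  fin_cases s <;> fin_cases t <;>
    norm_num [sgC, sg2, show (1 + 1 : Fin 2) = 0 from rfl]

lemma star_sgC_mul_self (t : Fin 2) : star (sgC t) * sgC t = 1 := by
  fin_cases t <;> simp [sgC, sg2]

lemma sgC_inj {s t : Fin 2} (h : sgC s = sgC t) : s = t := by
  fin_cases s <;> fin_cases t <;> simp_all [sgC, sg2] <;> norm_num at h

lemma pauli_apply (a b : P2) (v w : P2) :
    pauli a b v w = if v = w + a then sgC (b ⬝ᵥ w) else 0 := by
  simp [pauli, Xm, Zm, Matrix.mul_apply]

lemma mul_pauli_apply (A : Mat) (a b : P2) (v w : P2) :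
    (A * pauli a b) v w = A v (w + a) * sgC (b ⬝ᵥ w) := by
  simp only [Matrix.mul_apply, pauli_apply]
  rw [Finset.sum_eq_single (w + a)]
  · simp
  · intro u _ hu
    rw [if_neg, mul_zero]
    intro h; exact hu h
  · intro h; simp at h

lemma pauli_mul_apply (A : Mat) (a b : P2) (v w : P2) :
    (pauli a b * A) v w = sgC (b ⬝ᵥ (v + a)) * A (v + a) w := by
  have key : ∀ (x y z : P2), (x = y + z) ↔ (y = x + z) := by decide
  simp only [Matrix.mul_apply, pauli_apply]
  rw [Finset.sum_eq_single (v + a)]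
  · rw [if_pos ((key v (v+a) a).mpr rfl)]
  · intro u _ hu
    rw [if_neg, zero_mul]
    intro h; exact hu ((key v u a).mp h)
  · intro h; simp at h

lemma pauli_mulVec (a b : P2) (ψ : P2 → ℂ) (v : P2) :
    (pauli a b).mulVec ψ v = sgC (b ⬝ᵥ (v + a)) * ψ (v + a) := by
  have key : ∀ (x y z : P2), (x = y + z) ↔ (y = x + z) := by decide
  simp only [Matrix.mulVec, dotProduct, pauli_apply]
  rw [Finset.sum_eq_single (v + a)]
  · rw [if_pos ((key v (v+a) a).mpr rfl)]
  · intro u _ hu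
    rw [if_neg, zero_mul]
    intro h; exact hu ((key v u a).mp h)
  · intro h; simp at h

/-- uniqueness of the Pauli normal form up to scalars -/
lemma pauli_smul_inj {c c' : ℂ} {a b a' b' : P2} (hc : c ≠ 0)
    (h : c • pauli a b = c' • pauli a' b') : a = a' ∧ b = b' := by
  have dot_ext : ∀ x y : P2, (∀ w : P2, x ⬝ᵥ w = y ⬝ᵥ w) → x = y := by decide
  have e1 := congrFun (congrFun h a) 0
  simp only [Matrix.smul_apply, pauli_apply, smul_eq_mul, zero_add, eq_self_iff_true, if_true,
    dotProduct_zero, sgC_zero, mul_one] at e1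
  have haa : a = a' := by
    by_contra hne
    rw [if_neg hne, mul_zero] at e1
    exact hc e1
  subst haa
  rw [if_pos rfl, mul_one] at e1
  subst e1
  refine ⟨rfl, dot_ext b b' fun w => ?_⟩
  have e2 := congrFun (congrFun h (w + a)) w
  simp only [Matrix.smul_apply, pauli_apply, smul_eq_mul] at e2
  rw [if_pos trivial, if_pos trivial] at e2
  exact sgC_inj (mul_left_cancel₀ hc e2)

section Gates

noncomputable def Dof (i : Fin 3) (v w : P2) : ℂ :=
  ∏ k ∈ Finset.univ.erase i, (if v k = w k then (1:ℂ) else 0)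

lemma Dof_eq (i : Fin 3) (v w : P2) :
    Dof i v w = if (∀ k, k ≠ i → v k = w k) then 1 else 0 := by
  rw [Dof, Finset.prod_boole]
  congr 1
  simp [Finset.mem_erase]

lemma gateAt_apply (g : Matrix (Fin 2) (Fin 2) ℂ) (i : Fin 3) (v w : P2) :
    gateAt g i v w = g (v i) (w i) * Dof i v w := by
  rw [gateAt, Matrix.of_apply, Dof, ← Finset.mul_prod_erase Finset.univ _ (Finset.mem_univ i)]
  rw [if_pos rfl]
  congr 1
  apply Finset.prod_congr rfl
  intro k hk
  rw [if_neg (Finset.mem_erase.mp hk).1]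

lemma sumCollapse (i : Fin 3) (φ : Fin 2 → ℂ) (v : P2) :
    ∑ u : P2, φ (u i) * (if (∀ k, k ≠ i → u k = v k) then (1:ℂ) else 0)
      = ∑ t : Fin 2, φ t := by
  simp only [mul_ite, mul_one, mul_zero]
  rw [Finset.sum_ite, Finset.sum_const_zero, add_zero]
  apply Finset.sum_nbij' (i := fun u => u i) (j := fun t => Function.update v i t)
  · intro u hu
    exact Finset.mem_univ _
  · intro t _
    simp only [Finset.mem_filter, Finset.mem_univ, true_and]
    intro k hk; exact Function.update_of_ne hk _ _
  · intro u hu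
    simp only [Finset.mem_filter, Finset.mem_univ, true_and] at hu
    funext k
    by_cases hk : k = i
    · subst hk; simp
    · rw [Function.update_of_ne hk]; exact (hu k hk).symm
  · intro t _; simp
  · intro u _; rfl

lemma gateAt_mul (g h : Matrix (Fin 2) (Fin 2) ℂ) (i : Fin 3) :
    gateAt g i * gateAt h i = gateAt (g * h) i := by
  ext v w
  simp only [Matrix.mul_apply, gateAt_apply, Dof_eq]
  by_cases hvw : ∀ k, k ≠ i → v k = w k
  · have key : ∀ u : P2, (g (v i) (u i) * (if (∀ k, k ≠ i → v k = u k) then (1:ℂ) else 0)) *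
        (h (u i) (w i) * (if (∀ k, k ≠ i → u k = w k) then (1:ℂ) else 0)) =
        (g (v i) (u i) * h (u i) (w i)) * (if (∀ k, k ≠ i → u k = v k) then (1:ℂ) else 0) := by
      intro u
      by_cases hu : ∀ k, k ≠ i → v k = u k
      · have hu' : ∀ k, k ≠ i → u k = v k := fun k hk => (hu k hk).symm
        rw [if_pos hu, if_pos (fun k hk => (hu' k hk).trans (hvw k hk)), if_pos hu']
        ring
      · rw [if_neg hu, if_neg (fun hc : ∀ k, k ≠ i → u k = v k =>
          hu (fun k hk => (hc k hk).symm))]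
        simp only [mul_zero, zero_mul]
    rw [Finset.sum_congr rfl (fun u _ => key u),
      sumCollapse i (fun t => g (v i) t * h t (w i)) v, if_pos hvw, mul_one]
  · rw [if_neg hvw, mul_zero]
    apply Finset.sum_eq_zero
    intro u _
    by_cases hu : ∀ k, k ≠ i → v k = u k
    · rw [if_neg (fun hc : ∀ k, k ≠ i → u k = w k =>
        hvw (fun k hk => (hu k hk).trans (hc k hk)))]
      simp only [mul_zero, zero_mul]
    · rw [if_neg hu]
      simp only [mul_zero, zero_mul]

lemma gateAt_one (i : Fin 3) : gateAt (1 : Matrix (Fin 2) (Fin 2) ℂ) i = 1 := by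
  ext v w
  rw [gateAt_apply, Dof_eq, Matrix.one_apply, Matrix.one_apply]
  by_cases h : v = w
  · subst h; simp
  · rw [if_neg h]
    by_cases h1 : ∀ k, k ≠ i → v k = w k
    · have hvi : ¬ v i = w i := fun hc =>
        h (funext fun k => if hk : k = i then hk ▸ hc else h1 k hk)
      rw [if_pos h1, if_neg hvi, zero_mul]
    · rw [if_neg h1, mul_zero]

lemma gateAt_conjTranspose (g : Matrix (Fin 2) (Fin 2) ℂ) (i : Fin 3) :
    (gateAt g i)ᴴ = gateAt gᴴ i := by
  ext v w
  rw [Matrix.conjTranspose_apply, gateAt_apply, gateAt_apply, Dof_eq, Dof_eq, star_mul']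
  congr 1
  · split
    · next hh => rw [if_pos (fun k hk => (hh k hk).symm)]; exact star_one ℂ
    · next hh => rw [if_neg (fun hc : ∀ k, k ≠ i → v k = w k =>
        hh (fun k hk => (hc k hk).symm))]; exact star_zero ℂ

end Gates

section TwoByTwo

lemma sqrt2_sq : ((Real.sqrt 2 : ℝ) : ℂ) * ((Real.sqrt 2 : ℝ) : ℂ) = 2 := by
  rw [← Complex.ofReal_mul, Real.mul_self_sqrt] <;> norm_num

lemma x2z2_apply (s t : Fin 2) (p q : Fin 2) :
    (x2 s * z2 t) p q = if p = q + s then sgC (t * q) else 0 := by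
  simp [x2, z2, Matrix.mul_apply]

lemma mul_x2z2_apply (g : Matrix (Fin 2) (Fin 2) ℂ) (s t : Fin 2) (p q : Fin 2) :
    (g * (x2 s * z2 t)) p q = g p (q + s) * sgC (t * q) := by
  rw [Matrix.mul_apply]
  simp only [x2z2_apply]
  rw [Finset.sum_eq_single (q + s)]
  · rw [if_pos rfl]
  · intro u _ hu; rw [if_neg hu, mul_zero]
  · intro h; simp at h

lemma x2z2_mul_apply (g : Matrix (Fin 2) (Fin 2) ℂ) (s t : Fin 2) (p q : Fin 2) :
    ((x2 s * z2 t) * g) p q = sgC (t * (p + s)) * g (p + s) q := by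
  have key : ∀ (x y z : Fin 2), (x = y + z) ↔ (y = x + z) := by decide
  rw [Matrix.mul_apply]
  simp only [x2z2_apply]
  rw [Finset.sum_eq_single (p + s)]
  · rw [if_pos ((key p (p+s) s).mpr rfl)]
  · intro u _ hu; rw [if_neg (fun hc => hu ((key p u s).mp hc)), zero_mul]
  · intro h; simp at h

lemma hadamard_rel (s t : Fin 2) :
    _root_.hadamard * (x2 s * z2 t) = sgC (s * t) • ((x2 t * z2 s) * _root_.hadamard) := by
  ext p q
  rw [mul_x2z2_apply, Matrix.smul_apply, x2z2_mul_apply]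
  fin_cases s <;> fin_cases t <;> fin_cases p <;> fin_cases q <;>
    simp [_root_.hadamard, sgC, sg2, Matrix.smul_apply] <;> ring

lemma phase_rel (s t : Fin 2) :
    phaseGate * (x2 s * z2 t)
      = (if s = 0 then (1:ℂ) else Complex.I) • ((x2 s * z2 (s + t)) * phaseGate) := by
  ext p q
  rw [mul_x2z2_apply, Matrix.smul_apply, x2z2_mul_apply]
  fin_cases s <;> fin_cases t <;> fin_cases p <;> fin_cases q <;>
    simp [phaseGate, sgC, sg2, Matrix.smul_apply]

lemma hadamard_unitary : _root_.hadamardᴴ * _root_.hadamard = 1 := by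
  ext p q
  fin_cases p <;> fin_cases q <;>
    simp [_root_.hadamard, Matrix.mul_apply, Fin.sum_univ_two, Matrix.one_apply,
      Complex.star_def, map_div₀, Complex.conj_ofReal] <;>
    rw [← mul_inv, sqrt2_sq] <;> norm_num

lemma phase_unitary : phaseGateᴴ * phaseGate = 1 := by
  ext p q
  fin_cases p <;> fin_cases q <;>
    simp [phaseGate, Matrix.mul_apply, Fin.sum_univ_two, Matrix.one_apply]

end TwoByTwo

section Push

lemma dot_split (i : Fin 3) (b w : P2) :
    b ⬝ᵥ w = b i * w i + ∑ k ∈ Finset.univ.erase i, b k * w k :=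
  (Finset.add_sum_erase _ _ (Finset.mem_univ i)).symm

lemma gate_push (g : Matrix (Fin 2) (Fin 2) ℂ) (i : Fin 3) (a b : P2) (a₁ b₁ : Fin 2)
    (lam : ℂ)
    (h2 : g * (x2 (a i) * z2 (b i)) = lam • ((x2 a₁ * z2 b₁) * g)) :
    gateAt g i * pauli a b
      = lam • (pauli (Function.update a i a₁) (Function.update b i b₁) * gateAt g i) := by
  have add_add_self : ∀ x y : Fin 2, x + y + y = x := by decide
  have eq_add_iff : ∀ x y z : Fin 2, x = y + z ↔ x + z = y := by decide
  set a' := Function.update a i a₁ with ha'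
  set b' := Function.update b i b₁ with hb'
  ext v w
  rw [mul_pauli_apply, Matrix.smul_apply, pauli_mul_apply, gateAt_apply, gateAt_apply,
    Dof_eq, Dof_eq, smul_eq_mul]
  have hva' : ∀ k, (v + a') k = v k + a' k := fun k => rfl
  by_cases hoff : ∀ k, k ≠ i → v k = w k + a k
  · have h1 : (∀ k, k ≠ i → v k = (w + a) k) := fun k hk => hoff k hk
    have h2' : (∀ k, k ≠ i → (v + a') k = w k) := by
      intro k hk
      rw [hva' k, ha', Function.update_of_ne hk, hoff k hk, add_add_self]
    rw [if_pos h1, if_pos h2']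
    have entry := congrFun (congrFun h2 (v i)) (w i)
    rw [mul_x2z2_apply, Matrix.smul_apply, x2z2_mul_apply, smul_eq_mul] at entry
    have hdot1 : sgC (b ⬝ᵥ w)
        = sgC (b i * w i) * sgC (∑ k ∈ Finset.univ.erase i, b k * w k) := by
      rw [dot_split i b w, sgC_add]
    have hdot2 : sgC (b' ⬝ᵥ (v + a'))
        = sgC (b₁ * (v i + a₁)) * sgC (∑ k ∈ Finset.univ.erase i, b k * w k) := by
      rw [dot_split i b' (v + a'), sgC_add]
      congr 2
      · rw [hb', Function.update_self, hva' i, ha', Function.update_self]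
      · apply Finset.sum_congr rfl
        intro k hk
        have hk' := (Finset.mem_erase.mp hk).1
        rw [hb', Function.update_of_ne hk', hva' k, ha', Function.update_of_ne hk',
          hoff k hk', add_add_self]
    have hwai : (w + a) i = w i + a i := rfl
    have hvai : (v + a') i = v i + a₁ := by
      rw [hva' i, ha', Function.update_self]
    rw [hwai, hvai, hdot1, hdot2]
    calc g (v i) (w i + a i) * 1 * (sgC (b i * w i) * sgC (∑ k ∈ Finset.univ.erase i, b k * w k))
        = (g (v i) (w i + a i) * sgC (b i * w i))
            * sgC (∑ k ∈ Finset.univ.erase i, b k * w k) := by ring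
      _ = (lam * (sgC (b₁ * (v i + a₁)) * g (v i + a₁) (w i)))
            * sgC (∑ k ∈ Finset.univ.erase i, b k * w k) := by rw [entry]
      _ = lam * (sgC (b₁ * (v i + a₁)) * sgC (∑ k ∈ Finset.univ.erase i, b k * w k)
            * (g (v i + a₁) (w i) * 1)) := by ring
  · push_neg at hoff
    obtain ⟨k₀, hk₀, hne⟩ := hoff
    have h1 : ¬ (∀ k, k ≠ i → v k = (w + a) k) := fun hc => hne (hc k₀ hk₀)
    have h2' : ¬ (∀ k, k ≠ i → (v + a') k = w k) := by
      intro hc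
      apply hne
      have := hc k₀ hk₀
      rw [hva' k₀, ha', Function.update_of_ne hk₀] at this
      exact (eq_add_iff (v k₀) (w k₀) (a k₀)).mpr this
    rw [if_neg h1, if_neg h2']
    ring

lemma cnot_push (i j : Fin 3) (hij : i ≠ j) (a b : P2) :
    cnot3 i j * pauli a b
      = pauli (Function.update a j (a i + a j)) (Function.update b i (b i + b j))
          * cnot3 i j := by
  have hXY : ∀ (i j : Fin 3), i ≠ j → ∀ (w a : P2),
      Function.update (w+a) j ((w+a) i + (w+a) j) + Function.update a j (a i + a j)
        = Function.update w j (w i + w j) := by decide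
  have hD2 : ∀ (i j : Fin 3), i ≠ j → ∀ (w a b : P2),
      Function.update b i (b i + b j) ⬝ᵥ Function.update w j (w i + w j) = b ⬝ᵥ w := by
    decide
  ext v w
  rw [mul_pauli_apply, pauli_mul_apply]
  have hc1 : cnot3 i j v (w + a)
      = if v = Function.update (w+a) j ((w+a) i + (w+a) j) then (1:ℂ) else 0 := rfl
  have hc2 : cnot3 i j (v + Function.update a j (a i + a j)) w
      = if v + Function.update a j (a i + a j) = Function.update w j (w i + w j) then (1:ℂ)
        else 0 := rfl
  rw [hc1, hc2]
  by_cases h : v = Function.update (w+a) j ((w+a) i + (w+a) j)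
  · have h' : v + Function.update a j (a i + a j) = Function.update w j (w i + w j) := by
      rw [h]; exact hXY i j hij w a
    rw [if_pos h, if_pos h', one_mul, mul_one]
    congr 1
    rw [← hD2 i j hij w a b, ← h']
  · have h' : ¬ (v + Function.update a j (a i + a j) = Function.update w j (w i + w j)) := by
      intro hc
      apply h
      have h2 : ∀ x y : P2, x + y + y = x := by decide
      calc v = v + Function.update a j (a i + a j) + Function.update a j (a i + a j) := by
            rw [h2]
        _ = _ := by rw [hc, ← hXY i j hij w a, h2]
    rw [if_neg h, if_neg h', zero_mul, mul_zero]

lemma cnot_conjTranspose (i j : Fin 3) (hij : i ≠ j) : (cnot3 i j)ᴴ = cnot3 i j := by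
  have key : ∀ (i j : Fin 3), i ≠ j → ∀ (v w : P2),
      (w = Function.update v j (v i + v j)) ↔ (v = Function.update w j (w i + w j)) := by
    decide
  ext v w
  rw [Matrix.conjTranspose_apply]
  show star (if w = Function.update v j (v i + v j) then (1:ℂ) else 0)
      = if v = Function.update w j (w i + w j) then (1:ℂ) else 0
  by_cases h : w = Function.update v j (v i + v j)
  · rw [if_pos h, if_pos ((key i j hij v w).mp h), star_one]
  · rw [if_neg h, if_neg (fun hc => h ((key i j hij v w).mpr hc)), star_zero]

lemma cnot_mul_self (i j : Fin 3) (hij : i ≠ j) : cnot3 i j * cnot3 i j = 1 := by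
  have key : ∀ (i j : Fin 3), i ≠ j → ∀ (v w : P2),
      (v = Function.update w j (w i + w j)) ↔ (w = Function.update v j (v i + v j)) := by
    decide
  ext v w
  rw [Matrix.mul_apply, Matrix.one_apply]
  have hterm : ∀ u : P2, cnot3 i j v u * cnot3 i j u w
      = if u = Function.update v j (v i + v j) then cnot3 i j u w else 0 := by
    intro u
    show (if v = Function.update u j (u i + u j) then (1:ℂ) else 0) * cnot3 i j u w = _
    by_cases h : v = Function.update u j (u i + u j)
    · rw [if_pos h, one_mul, if_pos ((key i j hij u v).mpr h)]
    · rw [if_neg h, zero_mul, if_neg (fun hc => h ((key i j hij u v).mp hc))]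
  rw [Finset.sum_congr rfl (fun u _ => hterm u), Finset.sum_ite_eq' Finset.univ]
  rw [if_pos (Finset.mem_univ _)]
  show (if Function.update v j (v i + v j) = Function.update w j (w i + w j) then (1:ℂ) else 0)
      = if v = w then 1 else 0
  have key2 : ∀ (i j : Fin 3), i ≠ j → ∀ (v w : P2),
      (Function.update v j (v i + v j) = Function.update w j (w i + w j)) ↔ v = w := by
    decide
  by_cases h : v = w
  · rw [if_pos ((key2 i j hij v w).mpr h), if_pos h]
  · rw [if_neg (fun hc => h ((key2 i j hij v w).mp hc)), if_neg h]

end Push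

section Group

abbrev Q2 := P2 × P2

/-- units whose underlying matrix is unitary and normalizes the Pauli group -/
noncomputable def Sgood : Subgroup Matˣ where
  carrier := {u | ((u : Mat)ᴴ * (u : Mat) = 1) ∧ ∀ a b : P2, ∃ lam : ℂ, ∃ a' b' : P2,
      star lam * lam = 1 ∧ (u : Mat) * pauli a b = lam • (pauli a' b' * (u : Mat))}
  one_mem' := by
    refine ⟨by simp, fun a b => ⟨1, a, b, by simp, by simp⟩⟩
  mul_mem' := by
    rintro u v ⟨hu1, hu2⟩ ⟨hv1, hv2⟩
    constructor
    · rw [Units.val_mul, Matrix.conjTranspose_mul]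
      calc (v : Mat)ᴴ * (u : Mat)ᴴ * ((u : Mat) * (v : Mat))
          = (v : Mat)ᴴ * (((u : Mat)ᴴ * (u : Mat)) * (v : Mat)) := by
            rw [mul_assoc, ← mul_assoc ((u : Mat)ᴴ)]
        _ = 1 := by rw [hu1, one_mul, hv1]
    · intro a b
      obtain ⟨lam1, a1, b1, hl1, he1⟩ := hv2 a b
      obtain ⟨lam2, a2, b2, hl2, he2⟩ := hu2 a1 b1
      refine ⟨lam1 * lam2, a2, b2, ?_, ?_⟩
      · have hh : star (lam1 * lam2) * (lam1 * lam2)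
            = (star lam1 * lam1) * (star lam2 * lam2) := by
          rw [star_mul']; ring
        rw [hh, hl1, hl2, mul_one]
      · rw [Units.val_mul, mul_assoc, he1, mul_smul_comm, ← mul_assoc, he2]
        rw [smul_mul_assoc, smul_smul, mul_comm lam1 lam2, mul_assoc]
  inv_mem' := by
    rintro u ⟨hu1, hu2⟩
    have hadj : (u : Mat)ᴴ = ((u⁻¹ : Matˣ) : Mat) := by
      calc (u : Mat)ᴴ = (u : Mat)ᴴ * ((u : Mat) * ((u⁻¹ : Matˣ) : Mat)) := by
            rw [u.mul_inv, mul_one]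
        _ = ((u : Mat)ᴴ * (u : Mat)) * ((u⁻¹ : Matˣ) : Mat) := by rw [mul_assoc]
        _ = ((u⁻¹ : Matˣ) : Mat) := by rw [hu1, one_mul]
    constructor
    · rw [← hadj, Matrix.conjTranspose_conjTranspose, hadj, u.mul_inv]
    · intro a b
      have hchoice : ∀ p : Q2, ∃ q : Q2, ∃ lam : ℂ, star lam * lam = 1 ∧
          (u : Mat) * pauli p.1 p.2 = lam • (pauli q.1 q.2 * (u : Mat)) := by
        intro p
        obtain ⟨lam, a', b', h1, h2⟩ := hu2 p.1 p.2
        exact ⟨(a', b'), lam, h1, h2⟩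
      choose f lam hl he using hchoice
      have hlam0 : ∀ p, lam p ≠ 0 := by
        intro p h0
        have := hl p
        rw [h0, mul_zero] at this
        exact one_ne_zero this.symm
      have hinj : Function.Injective f := by
        intro p q hpq
        have h1 := he p
        have h2 := he q
        rw [hpq] at h1
        have h3 : lam q • ((u : Mat) * pauli p.1 p.2)
            = lam p • ((u : Mat) * pauli q.1 q.2) := by
          rw [h1, h2, smul_comm]
        have h4 : (u : Mat) * (lam q • pauli p.1 p.2) = (u : Mat) * (lam p • pauli q.1 q.2) := by
          rw [mul_smul_comm, mul_smul_comm]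
          exact h3
        have h5 : lam q • pauli p.1 p.2 = lam p • pauli q.1 q.2 :=
          (Units.mul_right_inj u).mp h4
        obtain ⟨hA, hB⟩ := pauli_smul_inj (hlam0 q) h5
        exact Prod.ext hA hB
      obtain ⟨p, hp⟩ := Finite.injective_iff_surjective.mp hinj (a, b)
      refine ⟨(lam p)⁻¹, p.1, p.2, ?_, ?_⟩
      · rw [star_inv₀, ← mul_inv, hl p]
        norm_num
      · have e : (u : Mat) * pauli p.1 p.2 = lam p • (pauli a b * (u : Mat)) := by
          have := he p
          rw [hp] at this
          exact this
        have e2 : pauli a b * (u : Mat) = (lam p)⁻¹ • ((u : Mat) * pauli p.1 p.2) := by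
          rw [e, smul_smul, inv_mul_cancel₀ (hlam0 p), one_smul]
        calc ((u⁻¹ : Matˣ) : Mat) * pauli a b
            = ((u⁻¹ : Matˣ) : Mat) * (pauli a b * ((u : Mat) * ((u⁻¹ : Matˣ) : Mat))) := by
              rw [u.mul_inv, mul_one]
          _ = ((u⁻¹ : Matˣ) : Mat) * ((pauli a b * (u : Mat)) * ((u⁻¹ : Matˣ) : Mat)) := by
              rw [mul_assoc]
          _ = ((u⁻¹ : Matˣ) : Mat) * (((lam p)⁻¹ • ((u : Mat) * pauli p.1 p.2))
                * ((u⁻¹ : Matˣ) : Mat)) := by rw [e2]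
          _ = (lam p)⁻¹ • (pauli p.1 p.2 * ((u⁻¹ : Matˣ) : Mat)) := by
              rw [smul_mul_assoc, mul_smul_comm, ← mul_assoc, ← mul_assoc, u.inv_mul, one_mul]

lemma gens_sub : {u : Matˣ | (u : Mat) ∈ cliffordGens3} ⊆ (Sgood : Set Matˣ) := by
  rintro u hu
  rcases hu with ⟨i, hH | hP⟩ | ⟨i, j, hij, hC⟩
  · constructor
    · rw [hH, gateAt_conjTranspose, gateAt_mul, hadamard_unitary, gateAt_one]
    · intro a b
      refine ⟨sgC (a i * b i), Function.update a i (b i), Function.update b i (a i),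
        star_sgC_mul_self _, ?_⟩
      rw [hH]
      exact gate_push _root_.hadamard i a b (b i) (a i) (sgC (a i * b i))
        (hadamard_rel (a i) (b i))
  · constructor
    · rw [hP, gateAt_conjTranspose, gateAt_mul, phase_unitary, gateAt_one]
    · intro a b
      refine ⟨if a i = 0 then (1:ℂ) else Complex.I, Function.update a i (a i),
        Function.update b i (a i + b i), ?_, ?_⟩
      · split <;> simp [Complex.conj_I]
      · rw [hP]
        exact gate_push phaseGate i a b (a i) (a i + b i) (if a i = 0 then (1:ℂ) else Complex.I)
          (phase_rel (a i) (b i))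
  · constructor
    · rw [hC, cnot_conjTranspose i j hij, cnot_mul_self i j hij]
    · intro a b
      exact ⟨1, Function.update a j (a i + a j), Function.update b i (b i + b j), by simp,
        by rw [hC, cnot_push i j hij a b, one_smul]⟩

lemma closure_le_Sgood :
    Subgroup.closure {u : Matˣ | (u : Mat) ∈ cliffordGens3} ≤ Sgood :=
  (Subgroup.closure_le _).mpr gens_sub

end Group

section Invariant

/-- the quadratic form ⟨ψ, P ψ⟩ -/
noncomputable def qform (ψ : P2 → ℂ) (p : Q2) : ℂ :=
  star ψ ⬝ᵥ ((pauli p.1 p.2).mulVec ψ)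

/-- |z|⁴ without absolute values -/
noncomputable def tval (z : ℂ) : ℂ := (z * star z)^2

lemma tval_unit_mul {lam : ℂ} (hl : star lam * lam = 1) (z : ℂ) :
    tval (lam * z) = tval z := by
  unfold tval
  have h : (lam * z) * star (lam * z) = (star lam * lam) * (z * star z) := by
    rw [star_mul']; ring
  rw [h, hl, one_mul]

lemma adj_eq_inv (u : Matˣ) (h : (u : Mat)ᴴ * (u : Mat) = 1) :
    (u : Mat)ᴴ = ((u⁻¹ : Matˣ) : Mat) := by
  calc (u : Mat)ᴴ = (u : Mat)ᴴ * ((u : Mat) * ((u⁻¹ : Matˣ) : Mat)) := by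
        rw [u.mul_inv, mul_one]
    _ = ((u : Mat)ᴴ * (u : Mat)) * ((u⁻¹ : Matˣ) : Mat) := by rw [mul_assoc]
    _ = ((u⁻¹ : Matˣ) : Mat) := by rw [h, one_mul]

lemma sum_tval_invariant (u : Matˣ) (hu : u ∈ Sgood) (ψ : P2 → ℂ) :
    ∑ p : Q2, tval (qform ((u : Mat).mulVec ψ) p) = ∑ p : Q2, tval (qform ψ p) := by
  have hui := Sgood.inv_mem hu
  have hadj : (u : Mat)ᴴ = ((u⁻¹ : Matˣ) : Mat) := adj_eq_inv u hu.1
  have hchoice : ∀ p : Q2, ∃ q : Q2, ∃ lam : ℂ, star lam * lam = 1 ∧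
      ((u⁻¹ : Matˣ) : Mat) * pauli p.1 p.2 = lam • (pauli q.1 q.2 * ((u⁻¹ : Matˣ) : Mat)) := by
    intro p
    obtain ⟨lam, a', b', h1, h2⟩ := hui.2 p.1 p.2
    exact ⟨(a', b'), lam, h1, h2⟩
  choose f lam hl he using hchoice
  have hlam0 : ∀ p, lam p ≠ 0 := by
    intro p h0
    have := hl p
    rw [h0, mul_zero] at this
    exact one_ne_zero this.symm
  have hinj : Function.Injective f := by
    intro p q hpq
    have h1 := he p
    have h2 := he q
    rw [hpq] at h1
    have h3 : lam q • (((u⁻¹ : Matˣ) : Mat) * pauli p.1 p.2)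
        = lam p • (((u⁻¹ : Matˣ) : Mat) * pauli q.1 q.2) := by
      rw [h1, h2, smul_comm]
    have h4 : ((u⁻¹ : Matˣ) : Mat) * (lam q • pauli p.1 p.2)
        = ((u⁻¹ : Matˣ) : Mat) * (lam p • pauli q.1 q.2) := by
      rw [mul_smul_comm, mul_smul_comm]
      exact h3
    have h5 : lam q • pauli p.1 p.2 = lam p • pauli q.1 q.2 :=
      (Units.mul_right_inj u⁻¹).mp h4
    obtain ⟨hA, hB⟩ := pauli_smul_inj (hlam0 q) h5
    exact Prod.ext hA hB
  have hconj : ∀ p : Q2, (u : Mat)ᴴ * (pauli p.1 p.2 * (u : Mat))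
      = lam p • pauli (f p).1 (f p).2 := by
    intro p
    rw [hadj, ← mul_assoc, he p, smul_mul_assoc, mul_assoc, u.inv_mul, mul_one]
  have hpt : ∀ p : Q2, qform ((u : Mat).mulVec ψ) p = lam p * qform ψ (f p) := by
    intro p
    unfold qform
    rw [Matrix.star_mulVec, Matrix.mulVec_mulVec, Matrix.dotProduct_mulVec,
      Matrix.vecMul_vecMul, ← mul_assoc, mul_assoc ((u : Mat)ᴴ), hconj p,
      ← Matrix.dotProduct_mulVec, Matrix.smul_mulVec, dotProduct_smul,
      smul_eq_mul]
  calc ∑ p : Q2, tval (qform ((u : Mat).mulVec ψ) p)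
      = ∑ p : Q2, tval (qform ψ (f p)) := by
        apply Finset.sum_congr rfl
        intro p _
        rw [hpt p, tval_unit_mul (hl p)]
    _ = ∑ p : Q2, tval (qform ψ p) :=
        Fintype.sum_bijective f (Finite.injective_iff_bijective.mp hinj) _ _ (fun p => rfl)

lemma norm_invariant (u : Matˣ) (hu : u ∈ Sgood) (ψ : P2 → ℂ) :
    star ((u : Mat).mulVec ψ) ⬝ᵥ ((u : Mat).mulVec ψ) = star ψ ⬝ᵥ ψ := by
  rw [Matrix.star_mulVec, Matrix.dotProduct_mulVec, Matrix.vecMul_vecMul, hu.1,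
    Matrix.vecMul_one]

end Invariant

section Numerics

lemma sqrt3_inv_sq : ((Real.sqrt 3 : ℝ) : ℂ)⁻¹ * ((Real.sqrt 3 : ℝ) : ℂ)⁻¹ = (3:ℂ)⁻¹ := by
  rw [← mul_inv, ← Complex.ofReal_mul, Real.mul_self_sqrt] <;> norm_num

def ind : P2 → ℤ := fun v => ∑ j : Fin 3, if v = (fun i => if i = j then 1 else 0) then 1 else 0

lemma w3_eq (v : P2) : w3 v = ((Real.sqrt 3 : ℝ) : ℂ)⁻¹ * ((ind v : ℤ) : ℂ) := by
  rw [w3, ind, one_div]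
  push_cast
  rfl

lemma star_w3 (v : P2) : star (w3 v) = w3 v := by
  rw [w3_eq]
  simp [Complex.star_def, _root_.map_mul, map_inv₀, Complex.conj_ofReal]

def mI : Q2 → ℤ := fun p => ∑ v : P2, ind v * sg2 (p.2 ⬝ᵥ (v + p.1)) * ind (v + p.1)

set_option maxRecDepth 100000 in
lemma sum_mI : (∑ p : Q2, (mI p)^4) = 360 := by decide

lemma qform_w3 (p : Q2) : qform w3 p = (3:ℂ)⁻¹ * ((mI p : ℤ) : ℂ) := by
  obtain ⟨a, b⟩ := p
  have hq0 : qform w3 (a, b) = ∑ v : P2, star (w3 v) * ((pauli a b).mulVec w3 v) := rfl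
  rw [hq0, mI]
  simp only [pauli_mulVec]
  push_cast
  rw [Finset.mul_sum]
  apply Finset.sum_congr rfl
  intro v _
  rw [star_w3 v, w3_eq v, w3_eq (v + a)]
  have hsg : sgC (b ⬝ᵥ (v + a)) = ((sg2 (b ⬝ᵥ (v + a)) : ℤ) : ℂ) := rfl
  rw [hsg, ← sqrt3_inv_sq]
  push_cast
  ring

lemma tval_qform_w3 (p : Q2) : tval (qform w3 p) = (81:ℂ)⁻¹ * ((mI p : ℤ) : ℂ)^4 := by
  rw [qform_w3]
  unfold tval
  have hstar : star ((3:ℂ)⁻¹ * ((mI p : ℤ) : ℂ)) = (3:ℂ)⁻¹ * ((mI p : ℤ) : ℂ) := by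
    simp
  rw [hstar]
  have h81 : (81:ℂ)⁻¹ = (3:ℂ)⁻¹ * (3:ℂ)⁻¹ * ((3:ℂ)⁻¹ * (3:ℂ)⁻¹) := by norm_num
  rw [h81]
  ring

lemma sum_qform_w3 : ∑ p : Q2, tval (qform w3 p) = 360 / 81 := by
  have : ∀ p : Q2, tval (qform w3 p) = (81:ℂ)⁻¹ * (((mI p)^4 : ℤ) : ℂ) := by
    intro p
    rw [tval_qform_w3]
    push_cast
    ring
  rw [Finset.sum_congr rfl (fun p _ => this p), ← Finset.mul_sum, ← Int.cast_sum, sum_mI]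
  norm_num

lemma qform_e000 (p : Q2) : qform e000 p = if p.1 = 0 then 1 else 0 := by
  obtain ⟨a, b⟩ := p
  have hsolve : ∀ v a : P2, v + a = 0 → v = a := by decide
  have haa : a + a = (0 : P2) := by
    funext k
    exact (by decide : ∀ x : Fin 2, x + x = 0) (a k)
  have hq0 : qform e000 (a, b) = ∑ v : P2, star (e000 v) * ((pauli a b).mulVec e000 v) := rfl
  rw [hq0]
  simp only [pauli_mulVec]
  rw [Finset.sum_eq_single a]
  · rw [haa]
    by_cases ha : a = 0 <;> simp [e000, ha, sgC_zero]
  · intro v _ hv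
    have hz : e000 (v + a) = 0 := by
      simp only [e000]
      rw [if_neg (fun hc => hv (hsolve v a hc))]
    rw [hz, mul_zero, mul_zero]
  · intro h
    simp at h

lemma sum_qform_e000 : ∑ p : Q2, tval (qform e000 p) = 8 := by
  have h1 : ∀ p : Q2, tval (qform e000 p) = if p.1 = 0 then 1 else 0 := by
    intro p
    rw [qform_e000]
    split <;> simp [tval]
  rw [Finset.sum_congr rfl (fun p _ => h1 p), Fintype.sum_prod_type]
  have card8 : (Finset.univ : Finset P2).card = 8 := by decide
  have inner : ∀ a : P2, (∑ _b : P2, if a = 0 then (1:ℂ) else 0) = if a = 0 then 8 else 0 := by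
    intro a
    by_cases h : a = 0 <;> simp [h, Finset.sum_const, card8]
  rw [Finset.sum_congr rfl (fun a _ => inner a), Finset.sum_ite_eq' Finset.univ]
  simp

lemma e000_norm : star e000 ⬝ᵥ e000 = 1 := by
  have hq0 : star e000 ⬝ᵥ e000 = ∑ v : P2, star (e000 v) * e000 v := rfl
  rw [hq0]
  simp only [e000]
  rw [Finset.sum_eq_single (0 : P2)]
  · simp
  · intro v _ hv
    rw [if_neg hv]
    simp
  · intro h
    simp at h

lemma w3_norm : star w3 ⬝ᵥ w3 = 1 := by
  have h3 : (∑ v : P2, (ind v * ind v : ℤ)) = 3 := by decide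
  have hq0 : star w3 ⬝ᵥ w3 = ∑ v : P2, star (w3 v) * w3 v := rfl
  rw [hq0]
  have hterm : ∀ v : P2, star (w3 v) * w3 v = (3:ℂ)⁻¹ * ((ind v * ind v : ℤ) : ℂ) := by
    intro v
    rw [star_w3 v, w3_eq v, ← sqrt3_inv_sq]
    push_cast
    ring
  rw [Finset.sum_congr rfl (fun v _ => hterm v), ← Finset.mul_sum, ← Int.cast_sum, h3]
  norm_num

end Numerics

lemma final_contra (U : Matˣ) (hUS : U ∈ Sgood) (c : ℂ)
    (hEq : (U : Mat).mulVec e000 = c • w3) : False := by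
  have h1 : star ((U : Mat).mulVec e000) ⬝ᵥ ((U : Mat).mulVec e000) = 1 := by
    rw [norm_invariant U hUS, e000_norm]
  rw [hEq] at h1
  rw [star_smul, smul_dotProduct, dotProduct_smul, w3_norm,
    smul_eq_mul, smul_eq_mul, mul_one] at h1
  have h2 : ∑ p : Q2, tval (qform ((U : Mat).mulVec e000) p) = 8 := by
    rw [sum_tval_invariant U hUS, sum_qform_e000]
  rw [hEq] at h2
  have hq : ∀ p : Q2, qform (c • w3) p = (star c * c) * qform w3 p := by
    intro p
    unfold qform
    rw [star_smul, Matrix.mulVec_smul, smul_dotProduct, dotProduct_smul,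
      smul_eq_mul, smul_eq_mul]
    ring
  rw [Finset.sum_congr rfl (fun p _ => by rw [hq p, h1, one_mul]),
    sum_qform_w3] at h2
  norm_num at h2

end W3Aux

theorem w3_is_not_stabilizer_state :
    ∀ U : (Matrix (Fin 3 → Fin 2) (Fin 3 → Fin 2) ℂ)ˣ,
      U ∈ Subgroup.closure
          {u : (Matrix (Fin 3 → Fin 2) (Fin 3 → Fin 2) ℂ)ˣ |
            (u : Matrix (Fin 3 → Fin 2) (Fin 3 → Fin 2) ℂ) ∈ cliffordGens3} →
        ∀ c : ℂ,
          (U : Matrix (Fin 3 → Fin 2) (Fin 3 → Fin 2) ℂ).mulVec e000 ≠ c • w3 := by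
  intro U hU c hEq
  exact W3Aux.final_contra U (W3Aux.closure_le_Sgood hU) c hEq
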